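/- arXiv:2406.07708 — 2 statements merged into one kernel-verified Lean document; each statement's English description precedes it below -/
import Mathlib

section
/- For any linear functional T on the polynomial ring ℂ[z] and any polynomial S, the product S(x)·F_T(x) of S with the formal Stieltjes transform F_T(x) = ∑_{n≥0} x^{-n-1} T(z^n) decomposes as R(x) + ∑_{n≥0} x^{-n-1} T(S(z)·z^n), where R(x) = T((S(x) − S(z))/(x − z)) is a polynomial in x (here T is applied coefficientwise in z to the polynomial (S(x)−S(z))/(x−z) ∈ ℂ[z][x]). -/
/-- The polynomial `S(x)` viewed in `ℂ((x⁻¹))`, realized as the Laurent series field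
`LaurentSeries ℂ = ℂ((X))` with `X = x⁻¹`, by evaluating `S` at `X⁻¹`. -/
noncomputable def polyLS (S : Polynomial ℂ) : LaurentSeries ℂ :=
  Polynomial.aeval ((PowerSeries.X : PowerSeries ℂ) : LaurentSeries ℂ)⁻¹ S

/-- The series `∑_{n≥0} a n · x^{-n-1}`, i.e. `∑ a n · X^{n+1}` with `X = x⁻¹`. -/
noncomputable def seqLS (a : ℕ → ℂ) : LaurentSeries ℂ :=
  ((PowerSeries.mk a : PowerSeries ℂ) : LaurentSeries ℂ) *
    ((PowerSeries.X : PowerSeries ℂ) : LaurentSeries ℂ)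

/-- The formal Stieltjes transform `F_T(x) = ∑_{n≥0} x^{-n-1} T(z^n)` of a linear
functional `T` on `ℂ[z]`. -/
noncomputable def stieltjes (T : Polynomial ℂ →ₗ[ℂ] ℂ) : LaurentSeries ℂ :=
  seqLS fun n => T (Polynomial.X ^ n)
open Polynomial

noncomputable section

local notation "Xls" => ((PowerSeries.X : PowerSeries ℂ) : LaurentSeries ℂ)

lemma coeLS_injective : Function.Injective ((↑) : PowerSeries ℂ → LaurentSeries ℂ) :=
  HahnSeries.ofPowerSeries_injective

lemma Xls_ne_zero : Xls ≠ 0 := by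
  intro h
  have := coeLS_injective (h.trans (map_zero (HahnSeries.ofPowerSeries ℤ ℂ)).symm)
  exact PowerSeries.X_ne_zero this

lemma seqLS_add (a b : ℕ → ℂ) : seqLS (fun n => a n + b n) = seqLS a + seqLS b := by
  have : (PowerSeries.mk (fun n => a n + b n) : PowerSeries ℂ)
      = PowerSeries.mk a + PowerSeries.mk b := by
    ext n; simp
  simp [seqLS, this, add_mul]

lemma seqLS_smul (c : ℂ) (a : ℕ → ℂ) :
    seqLS (fun n => c * a n) = HahnSeries.C c * seqLS a := by
  have : (PowerSeries.mk (fun n => c * a n) : PowerSeries ℂ)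
      = PowerSeries.C c * PowerSeries.mk a := by
    ext n; simp
  simp only [seqLS, this, map_mul, HahnSeries.ofPowerSeries_C]
  ring

lemma seqLS_shift (a : ℕ → ℂ) :
    Xls⁻¹ * seqLS a = HahnSeries.C (a 0) + seqLS (fun n => a (n + 1)) := by
  have key : (PowerSeries.mk a : PowerSeries ℂ)
      = PowerSeries.C (a 0) + PowerSeries.X * PowerSeries.mk (fun n => a (n + 1)) := by
    ext n
    cases n with
    | zero => simp
    | succ m => simp [PowerSeries.coeff_succ_X_mul]
  have h1 : Xls⁻¹ * seqLS a = ((PowerSeries.mk a : PowerSeries ℂ) : LaurentSeries ℂ) := by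
    rw [seqLS, mul_comm ((PowerSeries.mk a : PowerSeries ℂ) : LaurentSeries ℂ) Xls,
      ← mul_assoc, inv_mul_cancel₀ Xls_ne_zero, one_mul]
  rw [h1, key]
  simp only [map_add, map_mul, HahnSeries.ofPowerSeries_C]
  rw [seqLS]
  ring

end

open Polynomial in
lemma algC (c : ℂ) : algebraMap ℂ (LaurentSeries ℂ) c = HahnSeries.C c := by
  rw [HahnSeries.algebraMap_apply']
  rw [show (algebraMap ℂ (PowerSeries ℂ)) c = PowerSeries.C c from rfl,
    HahnSeries.ofPowerSeries_C]

open Polynomial in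
lemma polyLS_C (a : ℂ) : polyLS (C a) = HahnSeries.C a := by
  rw [polyLS, aeval_C, algC]

open Polynomial in
lemma polyLS_smul (c : ℂ) (S : Polynomial ℂ) :
    polyLS (c • S) = HahnSeries.C c * polyLS S := by
  rw [Polynomial.smul_eq_C_mul, polyLS, map_mul, ← polyLS, ← polyLS, polyLS_C]

open Polynomial in
lemma stieltjes_mulLeft_C (T : Polynomial ℂ →ₗ[ℂ] ℂ) (a : ℂ) :
    stieltjes (T ∘ₗ LinearMap.mulLeft ℂ (C a)) = HahnSeries.C a * stieltjes T := by
  rw [stieltjes, stieltjes, ← seqLS_smul]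
  congr 1
  funext n
  simp only [LinearMap.comp_apply, LinearMap.mulLeft_apply]
  rw [← smul_eq_C_mul, map_smul, smul_eq_mul]

open Polynomial in
lemma stieltjes_mulLeft_add (T : Polynomial ℂ →ₗ[ℂ] ℂ) (p q : Polynomial ℂ) :
    stieltjes (T ∘ₗ LinearMap.mulLeft ℂ (p + q))
      = stieltjes (T ∘ₗ LinearMap.mulLeft ℂ p) + stieltjes (T ∘ₗ LinearMap.mulLeft ℂ q) := by
  rw [stieltjes, stieltjes, stieltjes, ← seqLS_add]
  congr 1
  funext n
  simp [add_mul]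

open Polynomial in
lemma stieltjes_shift (T : Polynomial ℂ →ₗ[ℂ] ℂ) :
    (((PowerSeries.X : PowerSeries ℂ) : LaurentSeries ℂ))⁻¹ * stieltjes T
      = HahnSeries.C (T 1) + stieltjes (T ∘ₗ LinearMap.mulLeft ℂ X) := by
  rw [stieltjes, stieltjes, seqLS_shift]
  have h1 : (fun n => T (X ^ (n + 1))) = fun n => (T ∘ₗ LinearMap.mulLeft ℂ X) (X ^ n) := by
    funext n; simp [pow_succ, mul_comm]
  rw [pow_zero, h1]

open Polynomial in
/-- existence of the divided difference -/
lemma exists_Q (S : Polynomial ℂ) :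
    ∃ Q : Polynomial (Polynomial ℂ),
      (X - C X) * Q = S.map C - C S := by
  obtain ⟨Q, hQ⟩ := @X_sub_C_dvd_sub_C_eval (Polynomial ℂ) X _ (S.map C)
  refine ⟨Q, ?_⟩
  rw [← hQ, eval_map, eval₂_C_X]

open Polynomial in
lemma Q_unique {S : Polynomial ℂ} {Q Q' : Polynomial (Polynomial ℂ)}
    (h : (X - C X) * Q = S.map C - C S)
    (h' : (X - C X) * Q' = S.map C - C S) : Q = Q' :=
  mul_left_cancel₀ (X_sub_C_ne_zero X) (h.trans h'.symm)

open Polynomial in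
/-- apply `T` coefficientwise -/
noncomputable def Rof (T : Polynomial ℂ →ₗ[ℂ] ℂ) (Q : Polynomial (Polynomial ℂ)) :
    Polynomial ℂ :=
  Q.sum fun i c => C (T c) * X ^ i

open Polynomial in
lemma Rof_coeff (T : Polynomial ℂ →ₗ[ℂ] ℂ) (Q : Polynomial (Polynomial ℂ)) (j : ℕ) :
    (Rof T Q).coeff j = T (Q.coeff j) := by
  rw [Rof, Polynomial.sum, finset_sum_coeff]
  simp only [coeff_C_mul, coeff_X_pow, mul_ite, mul_one, mul_zero]
  rw [Finset.sum_ite_eq Q.support j (fun i => T (Q.coeff i))]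
  split_ifs with h
  · rfl
  · rw [Polynomial.notMem_support_iff.mp h, map_zero]

open Polynomial in
lemma mulLeft_comp (T : Polynomial ℂ →ₗ[ℂ] ℂ) (p q : Polynomial ℂ) :
    (T ∘ₗ LinearMap.mulLeft ℂ p) ∘ₗ LinearMap.mulLeft ℂ q
      = T ∘ₗ LinearMap.mulLeft ℂ (p * q) := by
  ext r
  simp [mul_assoc]

open Polynomial in
lemma main (S : Polynomial ℂ) : ∀ (T : Polynomial ℂ →ₗ[ℂ] ℂ) (Q : Polynomial (Polynomial ℂ)),
    ((X - C X) * Q = S.map C - C S) → ∀ R : Polynomial ℂ, (∀ i, R.coeff i = T (Q.coeff i)) →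
    polyLS S * stieltjes T = polyLS R + stieltjes (T ∘ₗ LinearMap.mulLeft ℂ S) := by
  induction S using Polynomial.induction_on with
  | C a =>
    intro T Q hQ R hR
    have hQ0 : Q = 0 := by
      have : (X - C (X : Polynomial ℂ)) * Q = 0 := by
        rw [hQ, map_C]; ring
      rcases mul_eq_zero.mp this with h | h
      · exact absurd h (X_sub_C_ne_zero X)
      · exact h
    have hR0 : R = 0 := by
      ext i
      rw [hR i, hQ0]
      simp
    rw [hR0, hQ0] at *
    rw [polyLS_C, stieltjes_mulLeft_C]
    simp [polyLS]
  | add p q hp hq =>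
    intro T Q hQ R hR
    obtain ⟨Qp, hQp⟩ := exists_Q p
    obtain ⟨Qq, hQq⟩ := exists_Q q
    have hQeq : Q = Qp + Qq := by
      refine Q_unique hQ ?_
      rw [mul_add, hQp, hQq, Polynomial.map_add, map_add]
      ring
    have hReq : R = Rof T Qp + Rof T Qq := by
      ext i
      rw [hR i, hQeq, coeff_add, coeff_add, map_add, Rof_coeff, Rof_coeff]
    have e1 := hp T Qp hQp (Rof T Qp) (fun i => Rof_coeff T Qp i)
    have e2 := hq T Qq hQq (Rof T Qq) (fun i => Rof_coeff T Qq i)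
    rw [hReq]
    have hpq : polyLS (p + q) = polyLS p + polyLS q := by rw [polyLS, polyLS, polyLS, map_add]
    have hRR : polyLS (Rof T Qp + Rof T Qq) = polyLS (Rof T Qp) + polyLS (Rof T Qq) := by
      rw [polyLS, polyLS, polyLS, map_add]
    rw [hpq, hRR, stieltjes_mulLeft_add, add_mul, e1, e2]
    ring
  | monomial n a ih =>
    intro T Q hQ R hR
    set S : Polynomial ℂ := C a * X ^ n with hS
    set T' : Polynomial ℂ →ₗ[ℂ] ℂ := T ∘ₗ LinearMap.mulLeft ℂ X with hT'
    have hXS : C a * X ^ (n + 1) = X * S := by rw [hS]; ring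
    obtain ⟨Qs, hQs⟩ := exists_Q S
    have key : (X - C X) * (S.map C + C X * Qs)
        = (X * S).map C - C (X * S) := by
      have h1 : (X * S).map (C : ℂ →+* Polynomial ℂ) = X * S.map C := by
        rw [Polynomial.map_mul, map_X]
      have h2 : (C (X * S) : Polynomial (Polynomial ℂ)) = C (X : Polynomial ℂ) * C S :=
        map_mul _ _ _
      rw [h1, h2]
      calc (X - C X) * (S.map C + C X * Qs)
          = (X - C X) * S.map C + C (X : Polynomial ℂ) * ((X - C X) * Qs) := by ring
        _ = _ := by rw [hQs]; ring
    have hQeq : Q = S.map C + C X * Qs := by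
      refine Q_unique ?_ key
      rw [← hXS] at *
      exact hQ
    have hTC : ∀ c : ℂ, T (C c) = T 1 * c := fun c => by
      rw [show (C c : Polynomial ℂ) = c • (1 : Polynomial ℂ) by rw [smul_eq_C_mul, mul_one],
        map_smul, smul_eq_mul, mul_comm]
    have hReq : R = T 1 • S + Rof T' Qs := by
      ext i
      rw [hR i, hQeq, coeff_add, coeff_map, coeff_C_mul, map_add, coeff_add, coeff_smul,
        Rof_coeff, smul_eq_mul]
      congr 1
      · rw [hTC, hS, coeff_C_mul]
      · rw [hT']; simp
    have ihx := ih T' Qs hQs (Rof T' Qs) (fun i => Rof_coeff T' Qs i)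
    have hmul : polyLS (C a * X ^ (n + 1)) = polyLS X * polyLS S := by
      rw [hXS, polyLS, polyLS, polyLS, map_mul]
    have hX : polyLS X = (((PowerSeries.X : PowerSeries ℂ) : LaurentSeries ℂ))⁻¹ := by
      rw [polyLS, aeval_X]
    calc polyLS (C a * X ^ (n + 1)) * stieltjes T
        = polyLS S * ((((PowerSeries.X : PowerSeries ℂ) : LaurentSeries ℂ))⁻¹ * stieltjes T) := by
          rw [hmul, hX]; ring
      _ = polyLS S * (HahnSeries.C (T 1) + stieltjes T') := by rw [stieltjes_shift]
      _ = HahnSeries.C (T 1) * polyLS S + polyLS S * stieltjes T' := by ring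
      _ = HahnSeries.C (T 1) * polyLS S
            + (polyLS (Rof T' Qs) + stieltjes (T' ∘ₗ LinearMap.mulLeft ℂ S)) := by rw [ihx]
      _ = polyLS R + stieltjes (T ∘ₗ LinearMap.mulLeft ℂ (C a * X ^ (n + 1))) := by
          have hcomp : T' ∘ₗ LinearMap.mulLeft ℂ S
              = T ∘ₗ LinearMap.mulLeft ℂ (C a * X ^ (n + 1)) := by
            rw [hT', mulLeft_comp, ← hXS]
          have hadd : polyLS (T 1 • S + Rof T' Qs)
              = HahnSeries.C (T 1) * polyLS S + polyLS (Rof T' Qs) := by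
            rw [polyLS, map_add, ← polyLS, ← polyLS, polyLS_smul]
          rw [hReq, hadd, hcomp]
          ring

/-- for a linear functional `T` on `ℂ[z]` and a polynomial `S`,
`S(x)·F_T(x) = R(x) + ∑_{n≥0} x^{-n-1} T(S(z)·z^n)` where `R` is obtained by applying `T`
coefficientwise (in `z`) to the polynomial `Q = (S(x) − S(z))/(x − z) ∈ ℂ[z][x]`. -/
theorem statement0 (T : Polynomial ℂ →ₗ[ℂ] ℂ) (S : Polynomial ℂ)
    (Q : Polynomial (Polynomial ℂ))
    (hQ : (Polynomial.X - Polynomial.C Polynomial.X) * Q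
        = S.map Polynomial.C - Polynomial.C S)
    (R : Polynomial ℂ) (hR : ∀ i, R.coeff i = T (Q.coeff i)) :
    polyLS S * stieltjes T
      = polyLS R + stieltjes (T ∘ₗ LinearMap.mulLeft ℂ S) := main S T Q hQ R hR
end

section
/- Fix t ∈ ℂ with t ≠ 1, a nonzero polynomial P ∈ ℂ[x], and a formal power series F_T ∈ x^{-1}ℂ[[x^{-1}]] such that Q(x) := P(x)·(F_T(x+1/2) − t·F_T(x−1/2)) is a polynomial. Suppose r, s ∈ ℂ[x] are coprime with s monic, deg r < deg s ≤ n, and P(x)·(r(x+1/2)/s(x+1/2) − t·r(x−1/2)/s(x−1/2)) − Q(x), expanded at x = ∞, lies in x^{-2n-1}ℂ[[x^{-1}]] after division by P(x). Then r/s is the unique [n−1/n] Padé approximant of F_T at x = ∞, i.e., F_T(x) − r(x)/s(x) ∈ x^{-2n-1}ℂ[[x^{-1}]]. -/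
open Finset in
/-- Coefficient of `x^{-m-1}` in `F(x+c)` for `F = ∑ a n x^{-n-1}`, via binomial expansion. -/
noncomputable def shiftCoeff (c : ℂ) (a : ℕ → ℂ) (m : ℕ) : ℂ :=
  ∑ n ∈ range (m + 1), a n * (-1) ^ (m - n) * (Nat.choose m n : ℂ) * c ^ (m - n)

open Polynomial PowerSeries Finset

namespace St9

abbrev LS := LaurentSeries ℂ
abbrev PS := PowerSeries ℂ

noncomputable def xls : LS := ((PowerSeries.X : PS) : LS)⁻¹

lemma coeX_eq : ((PowerSeries.X : PS) : LS) = HahnSeries.single (1 : ℤ) (1 : ℂ) :=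
  HahnSeries.ofPowerSeries_X

lemma xls_eq : xls = HahnSeries.single (-1 : ℤ) (1 : ℂ) := by
  rw [xls, coeX_eq]
  have := HahnSeries.inv_single (1 : ℤ) (1 : ℂ)
  simpa using this

lemma xls_mul_coeX : xls * ((PowerSeries.X : PS) : LS) = 1 := by
  rw [xls_eq, coeX_eq, HahnSeries.single_mul_single]
  norm_num

lemma xls_ne : xls ≠ 0 := by
  rw [xls_eq]
  exact HahnSeries.single_ne_zero one_ne_zero

-- coefficient of seqLS
lemma seqLS_coeff (f : ℕ → ℂ) (m : ℤ) :
    (seqLS f).coeff m = if 1 ≤ m then f (m - 1).toNat else 0 := by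
  rw [seqLS, ← PowerSeries.coe_mul, PowerSeries.coeff_coe]
  by_cases h1 : 1 ≤ m
  · rw [if_neg (by omega), if_pos h1]
    have : m.natAbs = (m-1).toNat + 1 := by omega
    rw [this, PowerSeries.coeff_succ_mul_X]
    simp
  · rw [if_neg h1]
    by_cases h0 : m = 0
    · subst h0
      simp [PowerSeries.coeff_zero_eq_constantCoeff]
    · rw [if_pos (by omega)]

end St9

namespace St9

lemma algebraMap_LS (c : ℂ) : algebraMap ℂ LS c = HahnSeries.single (0 : ℤ) c := by
  have h : algebraMap ℂ LS c = HahnSeries.ofPowerSeries ℤ ℂ (PowerSeries.C c) := rfl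
  rw [h, HahnSeries.ofPowerSeries_C, HahnSeries.C_apply]

lemma xls_mul_coeff (F : LS) (m : ℤ) : (xls * F).coeff m = F.coeff (m+1) := by
  rw [xls_eq]
  have := HahnSeries.coeff_single_mul_add (r := (1:ℂ)) (x := F) (a := m+1) (b := (-1 : ℤ))
  simpa using this

lemma C_mul_coeff (c : ℂ) (F : LS) (m : ℤ) :
    ((algebraMap ℂ LS c) * F).coeff m = c * F.coeff m := by
  rw [algebraMap_LS]
  have := HahnSeries.coeff_single_mul_add (r := c) (x := F) (a := m) (b := (0 : ℤ))
  simpa using this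

lemma C_coeff (c : ℂ) (m : ℤ) :
    (algebraMap ℂ LS c).coeff m = if m = 0 then c else 0 := by
  rw [algebraMap_LS]
  by_cases h : m = 0
  · subst h; simp
  · rw [if_neg h, HahnSeries.coeff_single_of_ne (Ne.symm ?_)]
    exact fun hc => h (by omega)

lemma shiftCoeff_zero' (b : ℕ → ℂ) (m : ℕ) : shiftCoeff 0 b m = b m := by
  rw [shiftCoeff, Finset.sum_range_succ]
  simp only [Nat.sub_self, pow_zero, mul_one, Nat.choose_self, Nat.cast_one]
  rw [Finset.sum_eq_zero, zero_add]
  intro n hn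
  rw [Finset.mem_range] at hn
  rw [zero_pow (by omega), mul_zero]

lemma shiftCoeff_zero_seq (c : ℂ) (m : ℕ) : shiftCoeff c (fun _ => (0:ℂ)) m = 0 := by
  simp [shiftCoeff]

lemma shiftCoeff_at_zero (c : ℂ) (b : ℕ → ℂ) : shiftCoeff c b 0 = b 0 := by
  simp [shiftCoeff]

lemma pascal_step (c : ℂ) (b : ℕ → ℂ) (j : ℕ) :
    shiftCoeff c b (j+1) + c * shiftCoeff c b j
      = shiftCoeff c (fun n => b (n+1)) j := by
  simp only [shiftCoeff]
  rw [Finset.sum_range_succ'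
      (fun n => b n * (-1)^(j+1-n) * ((j+1).choose n : ℂ) * c^(j+1-n)) (j+1),
    Finset.mul_sum,
    Finset.sum_range_succ'
      (fun n => c * (b n * (-1)^(j-n) * (j.choose n : ℂ) * c^(j-n))) j]
  have h0 : b 0 * (-1)^(j+1-0) * ((j+1).choose 0 : ℂ) * c^(j+1-0)
      + c * (b 0 * (-1)^(j-0) * (j.choose 0 : ℂ) * c^(j-0)) = 0 := by
    simp only [Nat.sub_zero, Nat.choose_zero_right, Nat.cast_one, mul_one, pow_succ]
    ring
  have hext : (∑ n ∈ Finset.range j,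
        c * (b (n+1) * (-1)^(j-(n+1)) * (j.choose (n+1) : ℂ) * c^(j-(n+1))))
      = ∑ n ∈ Finset.range (j+1),
        c * (b (n+1) * (-1)^(j-(n+1)) * (j.choose (n+1) : ℂ) * c^(j-(n+1))) := by
    rw [Finset.sum_range_succ]
    simp [Nat.choose_eq_zero_of_lt (by omega : j < j + 1)]
  rw [hext]
  have comb : ∀ n ∈ Finset.range (j+1),
      (b (n+1) * (-1)^(j+1-(n+1)) * ((j+1).choose (n+1) : ℂ) * c^(j+1-(n+1)))
      + c * (b (n+1) * (-1)^(j-(n+1)) * (j.choose (n+1) : ℂ) * c^(j-(n+1)))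
      = b (n+1) * (-1)^(j-n) * (j.choose n : ℂ) * c^(j-n) := by
    intro n hn
    rw [Finset.mem_range] at hn
    have hs : j + 1 - (n+1) = j - n := by omega
    rw [hs]
    by_cases hnj : n = j
    · rw [hnj]
      simp [Nat.choose_eq_zero_of_lt (by omega : j < j + 1), Nat.choose_self]
    · have hlt : n < j := by omega
      have hd : j - n = (j - (n+1)) + 1 := by omega
      have hps : ((j+1).choose (n+1) : ℂ) = (j.choose n : ℂ) + (j.choose (n+1) : ℂ) := by
        rw [← Nat.cast_add, ← Nat.choose_succ_succ]
      rw [hps, hd, pow_succ, pow_succ]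
      ring
  calc (∑ n ∈ Finset.range (j+1),
          b (n+1) * (-1)^(j+1-(n+1)) * ((j+1).choose (n+1) : ℂ) * c^(j+1-(n+1)))
        + b 0 * (-1)^(j+1-0) * ((j+1).choose 0 : ℂ) * c^(j+1-0)
        + ((∑ n ∈ Finset.range (j+1),
          c * (b (n+1) * (-1)^(j-(n+1)) * (j.choose (n+1) : ℂ) * c^(j-(n+1))))
        + c * (b 0 * (-1)^(j-0) * (j.choose 0 : ℂ) * c^(j-0)))
      = (∑ n ∈ Finset.range (j+1),
          ((b (n+1) * (-1)^(j+1-(n+1)) * ((j+1).choose (n+1) : ℂ) * c^(j+1-(n+1)))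
          + c * (b (n+1) * (-1)^(j-(n+1)) * (j.choose (n+1) : ℂ) * c^(j-(n+1)))))
        + (b 0 * (-1)^(j+1-0) * ((j+1).choose 0 : ℂ) * c^(j+1-0)
          + c * (b 0 * (-1)^(j-0) * (j.choose 0 : ℂ) * c^(j-0))) := by
        rw [Finset.sum_add_distrib]; ring
    _ = ∑ n ∈ Finset.range (j+1), b (n+1) * (-1)^(j-n) * (j.choose n : ℂ) * c^(j-n) := by
        rw [h0, add_zero, Finset.sum_congr rfl comb]

end St9

namespace St9

noncomputable def zc (c : ℂ) : LS := xls + algebraMap ℂ LS c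

lemma zc_ne (c : ℂ) : zc c ≠ 0 := by
  intro h
  have h1 : (zc c).coeff (-1) = 1 := by
    rw [zc, HahnSeries.coeff_add, C_coeff, xls_eq]
    simp
  rw [h] at h1
  simp at h1

lemma seqLS_congr {f g : ℕ → ℂ} (h : ∀ n, f n = g n) : seqLS f = seqLS g := by
  have : f = g := funext h
  rw [this]

lemma seqLS_zero : seqLS (fun _ => (0:ℂ)) = 0 := by
  apply HahnSeries.coeff_injective
  funext m
  rw [seqLS_coeff]
  simp

lemma Tc (c : ℂ) (b : ℕ → ℂ) :
    zc c * seqLS (shiftCoeff c b)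
      = algebraMap ℂ LS (b 0) + seqLS (shiftCoeff c (fun n => b (n+1))) := by
  apply HahnSeries.coeff_injective
  funext m
  rw [zc, add_mul, HahnSeries.coeff_add, HahnSeries.coeff_add, xls_mul_coeff, C_mul_coeff,
    C_coeff, seqLS_coeff, seqLS_coeff, seqLS_coeff]
  rcases lt_trichotomy m 0 with h | h | h
  · rw [if_neg (by omega), if_neg (by omega), if_neg (by omega), if_neg (by omega)]
    ring
  · subst h
    norm_num
    rw [shiftCoeff_at_zero]
  · obtain ⟨j, rfl⟩ : ∃ j : ℕ, m = (j : ℤ) + 1 := ⟨(m-1).toNat, by omega⟩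
    have c1 : (1:ℤ) ≤ (j:ℤ) + 1 + 1 := by omega
    have c2 : (1:ℤ) ≤ (j:ℤ) + 1 := by omega
    have c3 : ¬((j:ℤ) + 1 = 0) := by omega
    have e1 : ((j:ℤ) + 1 + 1 - 1).toNat = j + 1 := by omega
    have e2 : ((j:ℤ) + 1 - 1).toNat = j := by omega
    rw [if_pos c1, if_pos c2, if_pos c2, if_neg c3, e1, e2, zero_add, pascal_step]

noncomputable def delta0 : ℕ → ℂ := fun n => if n = 0 then 1 else 0

lemma Phi_delta (c : ℂ) : seqLS (shiftCoeff c delta0) = (zc c)⁻¹ := by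
  symm
  apply inv_eq_of_mul_eq_one_right
  rw [Tc]
  have h1 : (fun n => delta0 (n+1)) = fun _ => (0:ℂ) := by
    funext n; simp [delta0]
  rw [h1]
  have h2 : shiftCoeff c (fun _ => (0:ℂ)) = fun _ => (0:ℂ) := by
    funext m; exact shiftCoeff_zero_seq c m
  rw [h2, seqLS_zero, add_zero, delta0]
  simp

noncomputable def shiftSeq (k : ℕ) (b : ℕ → ℂ) : ℕ → ℂ := fun m => if k ≤ m then b (m - k) else 0

lemma shiftSeq_zero (b : ℕ → ℂ) : shiftSeq 0 b = b := by
  funext m; simp [shiftSeq]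

lemma shiftSeq_succ (k : ℕ) (b : ℕ → ℂ) : shiftSeq 1 (shiftSeq k b) = shiftSeq (k+1) b := by
  funext m
  simp only [shiftSeq]
  by_cases h : k + 1 ≤ m
  · rw [if_pos (by omega), if_pos (by omega), if_pos h]
    congr 1
    omega
  · by_cases h1 : 1 ≤ m
    · rw [if_pos h1, if_neg (by omega), if_neg h]
    · rw [if_neg h1, if_neg h]

lemma M1 (c : ℂ) (b : ℕ → ℂ) :
    zc c * seqLS (shiftCoeff c (shiftSeq 1 b)) = seqLS (shiftCoeff c b) := by
  rw [Tc]
  have h0 : shiftSeq 1 b 0 = 0 := by simp [shiftSeq]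
  have h1 : (fun n => shiftSeq 1 b (n+1)) = b := by
    funext n; simp [shiftSeq]
  rw [h0, h1, map_zero, zero_add]

lemma Mk (c : ℂ) (b : ℕ → ℂ) (k : ℕ) :
    zc c ^ k * seqLS (shiftCoeff c (shiftSeq k b)) = seqLS (shiftCoeff c b) := by
  induction k with
  | zero => rw [pow_zero, one_mul, shiftSeq_zero]
  | succ k ih =>
    rw [← shiftSeq_succ, pow_succ]
    calc zc c ^ k * zc c * seqLS (shiftCoeff c (shiftSeq 1 (shiftSeq k b)))
        = zc c ^ k * (zc c * seqLS (shiftCoeff c (shiftSeq 1 (shiftSeq k b)))) := by ring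
      _ = zc c ^ k * seqLS (shiftCoeff c (shiftSeq k b)) := by rw [M1]
      _ = _ := ih

lemma uMk (c : ℂ) (b : ℕ → ℂ) (k : ℕ) :
    seqLS (shiftCoeff c (shiftSeq k b)) = ((zc c)⁻¹)^k * seqLS (shiftCoeff c b) := by
  rw [← Mk c b k, ← mul_assoc, ← mul_pow, inv_mul_cancel₀ (zc_ne c), one_pow, one_mul]

lemma shiftCoeff_add (c : ℂ) (f g : ℕ → ℂ) (m : ℕ) :
    shiftCoeff c (fun n => f n + g n) m = shiftCoeff c f m + shiftCoeff c g m := by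
  simp only [shiftCoeff, add_mul, Finset.sum_add_distrib]

lemma shiftCoeff_smul (c : ℂ) (r : ℂ) (f : ℕ → ℂ) (m : ℕ) :
    shiftCoeff c (fun n => r * f n) m = r * shiftCoeff c f m := by
  simp only [shiftCoeff, Finset.mul_sum]
  apply Finset.sum_congr rfl
  intro n _
  ring

lemma seqLS_add (f g : ℕ → ℂ) : seqLS (fun n => f n + g n) = seqLS f + seqLS g := by
  apply HahnSeries.coeff_injective
  funext m
  rw [HahnSeries.coeff_add, seqLS_coeff, seqLS_coeff, seqLS_coeff]
  by_cases h : 1 ≤ m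
  · rw [if_pos h, if_pos h, if_pos h]
  · rw [if_neg h, if_neg h, if_neg h, add_zero]

lemma C_mul_alt (r : ℂ) (F : LS) : r • F = algebraMap ℂ LS r * F := by
  apply HahnSeries.coeff_injective
  funext m
  rw [HahnSeries.coeff_smul, C_mul_coeff, smul_eq_mul]

lemma seqLS_smul (r : ℂ) (f : ℕ → ℂ) :
    seqLS (fun n => r * f n) = r • seqLS f := by
  apply HahnSeries.coeff_injective
  funext m
  rw [HahnSeries.coeff_smul, seqLS_coeff, seqLS_coeff, smul_eq_mul]
  by_cases h : 1 ≤ m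
  · rw [if_pos h, if_pos h]
  · rw [if_neg h, if_neg h, mul_zero]

lemma Phi_sum (c : ℂ) (N : ℕ) (f : ℕ → ℕ → ℂ) :
    seqLS (shiftCoeff c (fun m => ∑ k ∈ Finset.range N, f k m))
      = ∑ k ∈ Finset.range N, seqLS (shiftCoeff c (f k)) := by
  induction N with
  | zero =>
    have h2 : (fun m : ℕ => ∑ k ∈ Finset.range 0, f k m) = fun _ => (0:ℂ) := by
      funext m; simp
    rw [h2]
    have h3 : shiftCoeff c (fun _ : ℕ => (0:ℂ)) = fun _ => (0:ℂ) := by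
      funext m; exact shiftCoeff_zero_seq c m
    rw [h3, seqLS_zero, Finset.range_zero, Finset.sum_empty]
  | succ N ih =>
    rw [Finset.sum_range_succ]
    have h1 : (fun m => ∑ k ∈ Finset.range (N+1), f k m)
        = fun m => (∑ k ∈ Finset.range N, f k m) + f N m := by
      funext m; rw [Finset.sum_range_succ]
    rw [h1]
    have h2 : shiftCoeff c (fun m => (∑ k ∈ Finset.range N, f k m) + f N m)
        = fun m => shiftCoeff c (fun n => ∑ k ∈ Finset.range N, f k n) m
            + shiftCoeff c (f N) m := by
      funext m; exact shiftCoeff_add c _ _ m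
    rw [h2, seqLS_add, ih]

lemma L2 (c : ℂ) (g : Polynomial ℂ) (b : ℕ → ℂ) :
    (Polynomial.aeval ((zc c)⁻¹) g) * seqLS (shiftCoeff c b)
      = seqLS (shiftCoeff c
          (fun m => ∑ k ∈ Finset.range (g.natDegree + 1), g.coeff k * shiftSeq k b m)) := by
  rw [Polynomial.aeval_def, Polynomial.eval₂_eq_sum_range, Finset.sum_mul, Phi_sum]
  apply Finset.sum_congr rfl
  intro k _
  rw [mul_assoc, ← uMk, ← C_mul_alt, ← seqLS_smul]
  apply seqLS_congr
  intro m
  rw [← shiftCoeff_smul]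

end St9

namespace St9

lemma ZU (z : LS) (hz : z ≠ 0) (d : ℕ) (S : Polynomial ℂ) (hS : S.natDegree ≤ d) :
    Polynomial.aeval z S * (z⁻¹)^d = Polynomial.aeval z⁻¹ (Polynomial.reflect d S) := by
  have hrefl : (Polynomial.reflect d S).natDegree < d + 1 := by
    apply Nat.lt_succ_of_le
    rw [Polynomial.natDegree_le_iff_coeff_eq_zero]
    intro N hN
    rw [Polynomial.coeff_reflect]
    apply Polynomial.coeff_eq_zero_of_natDegree_lt
    have : Polynomial.revAt d N = N := by
      exact Polynomial.revAt_eq_self_of_lt hN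
    rw [this]; omega
  rw [Polynomial.aeval_def, Polynomial.aeval_def,
    Polynomial.eval₂_eq_sum_range' (algebraMap ℂ LS) (lt_of_le_of_lt hS (Nat.lt_succ_self d)) z,
    Polynomial.eval₂_eq_sum_range' (algebraMap ℂ LS) hrefl z⁻¹, Finset.sum_mul,
    ← Finset.sum_range_reflect
      (fun i => algebraMap ℂ LS ((Polynomial.reflect d S).coeff i) * (z⁻¹)^i) (d+1)]
  apply Finset.sum_congr rfl
  intro k hk
  rw [Finset.mem_range] at hk
  have hk' : k ≤ d := by omega
  have h1 : d + 1 - 1 - k = d - k := by omega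
  rw [h1, Polynomial.coeff_reflect, Polynomial.revAt_le (by omega : d - k ≤ d)]
  have h2 : d - (d - k) = k := by omega
  rw [h2]
  have h3 : (z⁻¹)^d = (z⁻¹)^(d-k) * (z⁻¹)^k := by rw [← pow_add]; congr 1; omega
  rw [h3, mul_assoc, mul_comm ((z⁻¹)^(d-k)) ((z⁻¹)^k), ← mul_assoc, ← mul_assoc,
    mul_assoc _ (z^k) _, ← mul_pow, mul_inv_cancel₀ hz, one_pow, mul_one]

lemma aeval_X_PS (p : Polynomial ℂ) :
    Polynomial.aeval (PowerSeries.X : PS) p = (p : PS) := by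
  rw [Polynomial.aeval_def]
  exact Polynomial.eval₂_C_X_eq_coe (φ := p)

lemma aeval_coeX (p : Polynomial ℂ) :
    Polynomial.aeval (((PowerSeries.X : PS)) : LS) p = ((p : PS) : LS) := by
  rw [Polynomial.aeval_def, ← aeval_X_PS p, Polynomial.aeval_def]
  have h := Polynomial.hom_eval₂ p (algebraMap ℂ PS) (HahnSeries.ofPowerSeries ℤ ℂ)
    (PowerSeries.X : PS)
  exact h.symm

lemma xls_inv : xls⁻¹ = ((PowerSeries.X : PS) : LS) := by
  rw [xls, inv_inv]

lemma polyLS_eq (S : Polynomial ℂ) : polyLS S = Polynomial.aeval xls S := rfl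

lemma polyLS_ne_zero {S : Polynomial ℂ} (hS : S ≠ 0) : polyLS S ≠ 0 := by
  intro h
  have hzu := ZU xls xls_ne S.natDegree S le_rfl
  rw [← polyLS_eq, h, zero_mul, xls_inv, aeval_coeX] at hzu
  have h2 : ((Polynomial.reflect S.natDegree S : PS)) = 0 := by
    apply HahnSeries.ofPowerSeries_injective (Γ := ℤ)
    rw [← hzu]
    simp
  rw [Polynomial.coe_eq_zero_iff, Polynomial.reflect_eq_zero_iff] at h2
  exact hS h2

end St9

namespace St9

lemma natDegree_reflect_le {d : ℕ} {S : Polynomial ℂ} (hS : S.natDegree ≤ d) :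
    (Polynomial.reflect d S).natDegree ≤ d := by
  rw [Polynomial.natDegree_le_iff_coeff_eq_zero]
  intro N hN
  rw [Polynomial.coeff_reflect]
  apply Polynomial.coeff_eq_zero_of_natDegree_lt
  have : Polynomial.revAt d N = N := by
    exact Polynomial.revAt_eq_self_of_lt hN
  rw [this]; omega

lemma zc_zero : zc 0 = xls := by rw [zc, map_zero, add_zero]

lemma shiftSeq_delta (k m : ℕ) : shiftSeq k delta0 m = if m = k then 1 else 0 := by
  simp only [shiftSeq, delta0]
  by_cases h : m = k
  · subst h; rw [if_pos le_rfl, if_pos (by omega), if_pos rfl]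
  · by_cases h2 : k ≤ m
    · rw [if_pos h2, if_neg (by omega), if_neg h]
    · rw [if_neg h2, if_neg h]

lemma key (c : ℂ) (d : ℕ) (s r : Polynomial ℂ) (hs : s.natDegree ≤ d) (hr : r.natDegree ≤ d)
    (b : ℕ → ℂ)
    (hyp : Polynomial.aeval xls s * seqLS b = Polynomial.aeval xls r) :
    Polynomial.aeval (zc c) s * seqLS (shiftCoeff c b) = Polynomial.aeval (zc c) r := by
  have hpdeg : (Polynomial.reflect d r).natDegree ≤ d := natDegree_reflect_le hr
  -- Step 1 : reflected hypothesis
  have h1 : Polynomial.aeval xls⁻¹ (Polynomial.reflect d s) * seqLS b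
      = Polynomial.aeval xls⁻¹ (Polynomial.reflect d r) := by
    calc Polynomial.aeval xls⁻¹ (Polynomial.reflect d s) * seqLS b
        = (Polynomial.aeval xls s * xls⁻¹^d) * seqLS b := by rw [ZU xls xls_ne d s hs]
      _ = (Polynomial.aeval xls s * seqLS b) * xls⁻¹^d := by ring
      _ = Polynomial.aeval xls r * xls⁻¹^d := by rw [hyp]
      _ = Polynomial.aeval xls⁻¹ (Polynomial.reflect d r) := ZU xls xls_ne d r hr
  -- Step 2 : the sequence gb
  have h2 : seqLS (fun m => ∑ k ∈ Finset.range ((Polynomial.reflect d s).natDegree + 1),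
        (Polynomial.reflect d s).coeff k * shiftSeq k b m)
      = Polynomial.aeval xls⁻¹ (Polynomial.reflect d r) := by
    have hb0 : seqLS b = seqLS (shiftCoeff 0 b) :=
      seqLS_congr (fun m => (shiftCoeff_zero' b m).symm)
    have hL := L2 0 (Polynomial.reflect d s) b
    rw [zc_zero] at hL
    have hgb : seqLS (shiftCoeff 0
          (fun m => ∑ k ∈ Finset.range ((Polynomial.reflect d s).natDegree + 1),
            (Polynomial.reflect d s).coeff k * shiftSeq k b m))
        = seqLS (fun m => ∑ k ∈ Finset.range ((Polynomial.reflect d s).natDegree + 1),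
            (Polynomial.reflect d s).coeff k * shiftSeq k b m) :=
      seqLS_congr (fun m => shiftCoeff_zero' _ m)
    rw [hgb] at hL
    rw [← hL, ← hb0, h1]
  -- coefficients of gb
  have h3 : ∀ m : ℕ, (∑ k ∈ Finset.range ((Polynomial.reflect d s).natDegree + 1),
        (Polynomial.reflect d s).coeff k * shiftSeq k b m)
      = (Polynomial.reflect d r).coeff (m+1) := by
    intro m
    have hc := congrArg (fun F : LS => F.coeff ((m:ℤ)+1)) h2
    rw [seqLS_coeff, if_pos (by omega : (1:ℤ) ≤ (m:ℤ)+1), xls_inv, aeval_coeX,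
      PowerSeries.coeff_coe, if_neg (by omega : ¬((m:ℤ)+1 < 0))] at hc
    have e1 : ((m:ℤ) + 1 - 1).toNat = m := by omega
    have e2 : ((m:ℤ) + 1).natAbs = m + 1 := by omega
    rw [e1, e2, Polynomial.coeff_coe] at hc
    exact hc
  have h4 : (Polynomial.reflect d r).coeff 0 = 0 := by
    have hc := congrArg (fun F : LS => F.coeff (0:ℤ)) h2
    rw [seqLS_coeff, if_neg (by omega : ¬((1:ℤ) ≤ 0)), xls_inv, aeval_coeX,
      PowerSeries.coeff_coe, if_neg (by omega : ¬((0:ℤ) < 0))] at hc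
    rw [show ((0:ℤ).natAbs) = 0 from rfl, Polynomial.coeff_coe] at hc
    exact hc.symm
  -- Step 3 : gb as finite delta combination
  have h5 : (fun m => ∑ k ∈ Finset.range ((Polynomial.reflect d s).natDegree + 1),
        (Polynomial.reflect d s).coeff k * shiftSeq k b m)
      = fun m => ∑ k ∈ Finset.range d,
        (Polynomial.reflect d r).coeff (k+1) * shiftSeq k delta0 m := by
    funext m
    rw [h3 m]
    by_cases hm : m < d
    · rw [Finset.sum_eq_single m]
      · rw [shiftSeq_delta, if_pos rfl, mul_one]
      · intro k _ hk
        rw [shiftSeq_delta, if_neg (fun h => hk h.symm), mul_zero]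
      · intro hnm
        exact absurd (Finset.mem_range.mpr hm) hnm
    · rw [Finset.sum_eq_zero, Polynomial.coeff_eq_zero_of_natDegree_lt (by omega)]
      intro k hk
      rw [Finset.mem_range] at hk
      rw [shiftSeq_delta, if_neg (by omega), mul_zero]
  -- Step 4 : shifted gb equals aeval u p
  have h6 : seqLS (shiftCoeff c (fun m => ∑ k ∈ Finset.range ((Polynomial.reflect d s).natDegree + 1),
        (Polynomial.reflect d s).coeff k * shiftSeq k b m))
      = Polynomial.aeval (zc c)⁻¹ (Polynomial.reflect d r) := by
    rw [h5, Phi_sum]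
    rw [Polynomial.aeval_def,
      Polynomial.eval₂_eq_sum_range' (algebraMap ℂ LS) (by omega : (Polynomial.reflect d r).natDegree < d + 1) (zc c)⁻¹,
      Finset.sum_range_succ', h4, map_zero, zero_mul, add_zero]
    apply Finset.sum_congr rfl
    intro k _
    have hsm : (fun m => (Polynomial.reflect d r).coeff (k+1) * shiftSeq k delta0 m)
        = fun m => (Polynomial.reflect d r).coeff (k+1) * shiftSeq k delta0 m := rfl
    calc seqLS (shiftCoeff c (fun m => (Polynomial.reflect d r).coeff (k+1) * shiftSeq k delta0 m))
        = seqLS (fun m => (Polynomial.reflect d r).coeff (k+1) * shiftCoeff c (shiftSeq k delta0) m) := by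
          apply seqLS_congr; intro m; rw [← shiftCoeff_smul]
      _ = (Polynomial.reflect d r).coeff (k+1) • seqLS (shiftCoeff c (shiftSeq k delta0)) := by
          rw [seqLS_smul]
      _ = (Polynomial.reflect d r).coeff (k+1) • (((zc c)⁻¹)^k * seqLS (shiftCoeff c delta0)) := by
          rw [uMk]
      _ = algebraMap ℂ LS ((Polynomial.reflect d r).coeff (k+1)) * ((zc c)⁻¹)^(k+1) := by
          rw [Phi_delta, C_mul_alt, pow_succ]
  -- Step 5 : conclude
  have h7 : Polynomial.aeval (zc c)⁻¹ (Polynomial.reflect d s) * seqLS (shiftCoeff c b)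
      = Polynomial.aeval (zc c)⁻¹ (Polynomial.reflect d r) := by
    rw [L2 c (Polynomial.reflect d s) b, h6]
  have hz := zc_ne c
  have hu : ((zc c)⁻¹)^d ≠ 0 := pow_ne_zero d (inv_ne_zero hz)
  apply mul_right_cancel₀ hu
  calc Polynomial.aeval (zc c) s * seqLS (shiftCoeff c b) * ((zc c)⁻¹)^d
      = (Polynomial.aeval (zc c) s * ((zc c)⁻¹)^d) * seqLS (shiftCoeff c b) := by ring
    _ = Polynomial.aeval (zc c)⁻¹ (Polynomial.reflect d s) * seqLS (shiftCoeff c b) := by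
        rw [ZU (zc c) hz d s hs]
    _ = Polynomial.aeval (zc c)⁻¹ (Polynomial.reflect d r) := h7
    _ = Polynomial.aeval (zc c) r * ((zc c)⁻¹)^d := (ZU (zc c) hz d r hr).symm

end St9

namespace St9

lemma seqLS_eq_coe (f : ℕ → ℂ) :
    seqLS f = (((PowerSeries.mk f * PowerSeries.X : PS)) : LS) := by
  rw [seqLS, ← PowerSeries.coe_mul]

lemma expand_frac (s r : Polynomial ℂ) (hs : s.Monic) (hdeg : r.degree < s.degree) :
    ∃ b : ℕ → ℂ, Polynomial.aeval xls s * seqLS b = Polynomial.aeval xls r := by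
  set d := s.natDegree with hd
  have hr : r.natDegree ≤ d := Polynomial.natDegree_le_natDegree (le_of_lt hdeg)
  have hrd : r.coeff d = 0 := by
    apply Polynomial.coeff_eq_zero_of_degree_lt
    rw [hd, ← Polynomial.degree_eq_natDegree hs.ne_zero]
    exact hdeg
  have hg0 : PowerSeries.constantCoeff ((Polynomial.reflect d s : Polynomial ℂ) : PS) = 1 := by
    rw [← PowerSeries.coeff_zero_eq_constantCoeff_apply, Polynomial.coeff_coe,
      Polynomial.coeff_reflect, Polynomial.revAt_le (Nat.zero_le d), Nat.sub_zero]
    exact hs.coeff_natDegree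
  have hh0 : PowerSeries.constantCoeff ((Polynomial.reflect d r : Polynomial ℂ) : PS) = 0 := by
    rw [← PowerSeries.coeff_zero_eq_constantCoeff_apply, Polynomial.coeff_coe,
      Polynomial.coeff_reflect, Polynomial.revAt_le (Nat.zero_le d), Nat.sub_zero]
    exact hrd
  set Bp : PS := (((Polynomial.reflect d s : Polynomial ℂ) : PS))⁻¹
      * ((Polynomial.reflect d r : Polynomial ℂ) : PS) with hBp
  refine ⟨fun m => PowerSeries.coeff (m+1) Bp, ?_⟩
  have hmkB : PowerSeries.mk (fun m => PowerSeries.coeff (m+1) Bp) * PowerSeries.X = Bp := by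
    ext n
    cases n with
    | zero =>
      rw [PowerSeries.coeff_zero_eq_constantCoeff, map_mul, PowerSeries.constantCoeff_X, mul_zero,
        hBp, map_mul, hh0, mul_zero]
    | succ n =>
      rw [PowerSeries.coeff_succ_mul_X, PowerSeries.coeff_mk]
  have hmul : ((Polynomial.reflect d s : Polynomial ℂ) : PS) * Bp
      = ((Polynomial.reflect d r : Polynomial ℂ) : PS) := by
    rw [hBp, ← mul_assoc, PowerSeries.mul_inv_cancel _ (by rw [hg0]; exact one_ne_zero), one_mul]
  have hLS : Polynomial.aeval (((PowerSeries.X : PS)) : LS) (Polynomial.reflect d s) * seqLS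
        (fun m => PowerSeries.coeff (m+1) Bp)
      = Polynomial.aeval (((PowerSeries.X : PS)) : LS) (Polynomial.reflect d r) := by
    rw [aeval_coeX, aeval_coeX, seqLS_eq_coe, hmkB, ← PowerSeries.coe_mul, hmul]
  have hx : xls⁻¹ ^ d * xls ^ d = 1 := by
    rw [← mul_pow, inv_mul_cancel₀ xls_ne, one_pow]
  calc Polynomial.aeval xls s * seqLS (fun m => PowerSeries.coeff (m+1) Bp)
      = (Polynomial.aeval xls s * xls⁻¹^d) * xls^d
        * seqLS (fun m => PowerSeries.coeff (m+1) Bp) := by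
        rw [mul_assoc (Polynomial.aeval xls s) _ _, hx, mul_one]
    _ = (Polynomial.aeval xls⁻¹ (Polynomial.reflect d s)
        * seqLS (fun m => PowerSeries.coeff (m+1) Bp)) * xls^d := by
        rw [ZU xls xls_ne d s le_rfl]; ring
    _ = Polynomial.aeval xls⁻¹ (Polynomial.reflect d r) * xls^d := by
        rw [xls_inv, hLS]
    _ = (Polynomial.aeval xls r * xls⁻¹^d) * xls^d := by rw [ZU xls xls_ne d r hr]
    _ = Polynomial.aeval xls r := by rw [mul_assoc, hx, mul_one]

lemma shiftCoeff_sub (c : ℂ) (f g : ℕ → ℂ) (m : ℕ) :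
    shiftCoeff c (fun n => f n - g n) m = shiftCoeff c f m - shiftCoeff c g m := by
  simp only [shiftCoeff, sub_mul, Finset.sum_sub_distrib]

lemma seqLS_sub (f g : ℕ → ℂ) : seqLS (fun n => f n - g n) = seqLS f - seqLS g := by
  apply HahnSeries.coeff_injective
  funext m
  rw [HahnSeries.coeff_sub, seqLS_coeff, seqLS_coeff, seqLS_coeff]
  by_cases h : 1 ≤ m
  · rw [if_pos h, if_pos h, if_pos h]
  · rw [if_neg h, if_neg h, if_neg h, sub_zero]

end St9


open St9

/-- fix `t ≠ 1`, `P ≠ 0`, and `F = ∑ a n x^{-n-1}` with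
`Q = P(x)(F(x+1/2) − t F(x−1/2))` a polynomial.  If `r, s` are coprime, `s` monic,
`deg r < deg s ≤ n`, and `(r/s)(x+1/2) − t(r/s)(x−1/2) − Q/P ∈ x^{-2n-1}ℂ[[x^{-1}]]`, then
`r/s` is the `[n−1/n]` Padé approximant of `F`: `F − r/s ∈ x^{-2n-1}ℂ[[x^{-1}]]`.
(Here the coefficient of `x^{-m}` is the coefficient of `X^m`, `X = x⁻¹`.) -/
theorem statement9 (t : ℂ) (ht : t ≠ 1) (P : Polynomial ℂ) (hP : P ≠ 0)
    (a : ℕ → ℂ) (Q : Polynomial ℂ)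
    (hQ : polyLS P * (seqLS (shiftCoeff (1 / 2) a) - t • seqLS (shiftCoeff (-(1 / 2)) a))
        = polyLS Q)
    (n : ℕ) (r s : Polynomial ℂ) (hco : IsCoprime r s) (hs : s.Monic)
    (hdeg : r.degree < s.degree) (hdegs : s.natDegree ≤ n)
    (happrox : ∀ m : ℤ, m < 2 * n + 1 →
      (polyLS (r.comp (Polynomial.X + Polynomial.C (1 / 2)))
            / polyLS (s.comp (Polynomial.X + Polynomial.C (1 / 2)))
          - t • (polyLS (r.comp (Polynomial.X - Polynomial.C (1 / 2)))
            / polyLS (s.comp (Polynomial.X - Polynomial.C (1 / 2))))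
          - polyLS Q / polyLS P).coeff m = 0) :
    ∀ m : ℤ, m < 2 * n + 1 → (seqLS a - polyLS r / polyLS s).coeff m = 0 := by
  classical
  set d := s.natDegree with hd
  have hr : r.natDegree ≤ d := Polynomial.natDegree_le_natDegree (le_of_lt hdeg)
  obtain ⟨b, hb⟩ := expand_frac s r hs hdeg
  have hsne : polyLS s ≠ 0 := polyLS_ne_zero hs.ne_zero
  have hdiv : polyLS r / polyLS s = seqLS b := by
    rw [div_eq_iff hsne, polyLS_eq, polyLS_eq, mul_comm]
    exact hb.symm
  -- composition identities
  have hcomp_plus : ∀ p : Polynomial ℂ,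
      polyLS (p.comp (Polynomial.X + Polynomial.C (1/2)))
        = Polynomial.aeval (zc (1/2)) p := by
    intro p
    rw [polyLS_eq, Polynomial.aeval_comp, map_add, Polynomial.aeval_X, Polynomial.aeval_C, zc]
  have hcomp_minus : ∀ p : Polynomial ℂ,
      polyLS (p.comp (Polynomial.X - Polynomial.C (1/2)))
        = Polynomial.aeval (zc (-(1/2))) p := by
    intro p
    rw [polyLS_eq, Polynomial.aeval_comp, map_sub, Polynomial.aeval_X, Polynomial.aeval_C, zc,
      map_neg, ← sub_eq_add_neg]
  -- nonvanishing of shifted denominators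
  have hsplus_ne : polyLS (s.comp (Polynomial.X + Polynomial.C (1/2))) ≠ 0 :=
    polyLS_ne_zero (hs.comp_X_add_C _).ne_zero
  have hsminus_ne : polyLS (s.comp (Polynomial.X - Polynomial.C (1/2))) ≠ 0 := by
    have : s.comp (Polynomial.X - Polynomial.C (1/2))
        = s.comp (Polynomial.X + Polynomial.C (-(1/2))) := by
      rw [map_neg, ← sub_eq_add_neg]
    rw [this]
    exact polyLS_ne_zero (hs.comp_X_add_C _).ne_zero
  -- shifted Padé fractions
  have hkey_plus := key (1/2) d s r le_rfl hr b hb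
  have hkey_minus := key (-(1/2)) d s r le_rfl hr b hb
  have hdiv_plus : polyLS (r.comp (Polynomial.X + Polynomial.C (1/2)))
      / polyLS (s.comp (Polynomial.X + Polynomial.C (1/2))) = seqLS (shiftCoeff (1/2) b) := by
    rw [div_eq_iff hsplus_ne, hcomp_plus, hcomp_plus, mul_comm]
    exact hkey_plus.symm
  have hdiv_minus : polyLS (r.comp (Polynomial.X - Polynomial.C (1/2)))
      / polyLS (s.comp (Polynomial.X - Polynomial.C (1/2))) = seqLS (shiftCoeff (-(1/2)) b) := by
    rw [div_eq_iff hsminus_ne, hcomp_minus, hcomp_minus, mul_comm]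
    exact hkey_minus.symm
  have hQdiv : polyLS Q / polyLS P
      = seqLS (shiftCoeff (1/2) a) - t • seqLS (shiftCoeff (-(1/2)) a) := by
    rw [div_eq_iff (polyLS_ne_zero hP), ← hQ, mul_comm]
  -- the error sequence
  set e : ℕ → ℂ := fun k => b k - a k with he
  have hseq : ∀ c : ℂ, seqLS (shiftCoeff c e)
      = seqLS (shiftCoeff c b) - seqLS (shiftCoeff c a) := by
    intro c
    rw [← seqLS_sub]
    apply seqLS_congr
    intro m
    rw [he, ← shiftCoeff_sub]
  -- scalar relations from happrox
  have hscal : ∀ j : ℕ, j < 2*n →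
      shiftCoeff (1/2) e j - t * shiftCoeff (-(1/2)) e j = 0 := by
    intro j hj
    have hm := happrox ((j:ℤ)+1) (by push_cast; omega)
    rw [hdiv_plus, hdiv_minus, hQdiv] at hm
    have hrw : seqLS (shiftCoeff (1/2) b)
          - t • seqLS (shiftCoeff (-(1/2)) b)
          - (seqLS (shiftCoeff (1/2) a) - t • seqLS (shiftCoeff (-(1/2)) a))
        = seqLS (shiftCoeff (1/2) e) - t • seqLS (shiftCoeff (-(1/2)) e) := by
      rw [hseq, hseq, smul_sub]
      abel
    rw [hrw] at hm
    rw [HahnSeries.coeff_sub, HahnSeries.coeff_smul, seqLS_coeff, seqLS_coeff,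
      if_pos (by omega : (1:ℤ) ≤ (j:ℤ)+1), if_pos (by omega : (1:ℤ) ≤ (j:ℤ)+1)] at hm
    have ej : ((j:ℤ) + 1 - 1).toNat = j := by omega
    rw [ej, smul_eq_mul] at hm
    exact hm
  -- strong induction : e vanishes below 2n
  have hzero : ∀ j : ℕ, j < 2*n → e j = 0 := by
    intro j
    induction j using Nat.strong_induction_on with
    | _ j ih =>
      intro hj
      have hred : ∀ c : ℂ, shiftCoeff c e j = e j := by
        intro c
        rw [shiftCoeff, Finset.sum_range_succ, Finset.sum_eq_zero, zero_add]
        · simp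
        · intro k hk
          rw [Finset.mem_range] at hk
          rw [ih k hk (by omega), zero_mul, zero_mul, zero_mul]
      have hsc := hscal j hj
      rw [hred, hred] at hsc
      have h1t : (1:ℂ) - t ≠ 0 := sub_ne_zero.mpr (Ne.symm ht)
      have : ((1:ℂ) - t) * e j = 0 := by linear_combination hsc
      rcases mul_eq_zero.mp this with h | h
      · exact absurd h h1t
      · exact h
  -- conclusion
  intro m hm
  rw [hdiv]
  have hsub : seqLS a - seqLS b = seqLS (fun k => a k - b k) := (seqLS_sub a b).symm
  rw [hsub, seqLS_coeff]
  by_cases h1 : 1 ≤ m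
  · rw [if_pos h1]
    have hj : (m - 1).toNat < 2*n := by omega
    have h2 := hzero ((m-1).toNat) hj
    rw [he] at h2
    simp only at h2
    have h3 : a ((m-1).toNat) - b ((m-1).toNat) = -(b ((m-1).toNat) - a ((m-1).toNat)) := by
      ring
    rw [h3, h2, neg_zero]
  · rw [if_neg h1]
end
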